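/- Let n ≥ 3, p > n, α = 1 − n/p, and T > 0. Let a, b : (0,T) × ℝ^n → ℝ be measurable and set A := sup_{τ ∈ (0,t)} τ^{1/2} ‖a(τ,·)‖_{L^∞(ℝ^n)} and B := sup_{τ ∈ (0,t)} τ^{n/(2p)} sup_{y ∈ ℝ^n} |y|^{α} |b(τ,y)|, assumed finite. Then there exists a constant c > 0, depending only on n and p and independent of a and b, such that for all t ∈ (0,T) and all x ∈ ℝ^n with x ≠ 0: |x|^{α} · t^{n/(2p)} · ∫₀^t ∫_{ℝ^n} (|x − y| + (t − τ)^{1/2})^{−(n+1)} |a(τ,y)| |b(τ,y)| dy dτ ≤ c · A · B. -/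

import Mathlib

open MeasureTheory ENNReal

/-- `A(t) = sup_{τ ∈ (0,t)} τ^{1/2} ‖a(τ,·)‖_{L^∞(ℝ^n)}` (valued in `ℝ≥0∞`). -/
noncomputable def supA (n : ℕ) (a : ℝ → EuclideanSpace ℝ (Fin n) → ℝ) (t : ℝ) : ℝ≥0∞ :=
  ⨆ τ ∈ Set.Ioo (0 : ℝ) t, ENNReal.ofReal (τ ^ ((1 : ℝ) / 2)) * eLpNorm (a τ) ⊤ volume

/-- `B(t) = sup_{τ ∈ (0,t)} τ^{n/(2p)} sup_y |y|^α |b(τ,y)|` (valued in `ℝ≥0∞`). -/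
noncomputable def supB (n : ℕ) (p α : ℝ) (b : ℝ → EuclideanSpace ℝ (Fin n) → ℝ)
    (t : ℝ) : ℝ≥0∞ :=
  ⨆ τ ∈ Set.Ioo (0 : ℝ) t, ENNReal.ofReal (τ ^ ((n : ℝ) / (2 * p))) *
    ⨆ y : EuclideanSpace ℝ (Fin n), ENNReal.ofReal (‖y‖ ^ α * |b τ y|)

section Aux

open Metric

noncomputable def C2 (n : ℕ) : ℝ≥0∞ :=
  ∫⁻ w : EuclideanSpace ℝ (Fin n), ENNReal.ofReal ((1 + ‖w‖) ^ (-((n : ℝ) + 1)))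

lemma C2_lt_top (n : ℕ) : C2 n < ⊤ := by
  apply finite_integral_one_add_norm
  rw [finrank_euclideanSpace_fin]; exact lt_add_one _

noncomputable def C3 (n : ℕ) (α : ℝ) : ℝ≥0∞ :=
  ENNReal.ofReal (2 ^ α) * (1 - ENNReal.ofReal ((2:ℝ) ^ (α - (n:ℝ))))⁻¹ *
    volume (ball (0 : EuclideanSpace ℝ (Fin n)) 1)

lemma C3_lt_top (n : ℕ) (α : ℝ) (hα : α < n) : C3 n α < ⊤ := by
  refine ENNReal.mul_lt_top (ENNReal.mul_lt_top ofReal_lt_top ?_) measure_ball_lt_top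
  rw [ENNReal.inv_lt_top, tsub_pos_iff_lt]
  apply ENNReal.ofReal_lt_one.2
  apply Real.rpow_lt_one_of_one_lt_of_neg one_lt_two (by linarith)

lemma myLintegral_smul {n : ℕ} (f : EuclideanSpace ℝ (Fin n) → ℝ≥0∞) (hf : Measurable f)
    {R : ℝ} (hR : 0 < R) :
    ∫⁻ x, f x = ENNReal.ofReal (R ^ n) * ∫⁻ x, f (R • x) := by
  have h1 : ∫⁻ x, f (R • x) = ∫⁻ y, f y ∂(Measure.map (R • ·) volume) :=
    (lintegral_map hf (measurable_const_smul R)).symm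
  rw [h1, Measure.map_addHaar_smul volume hR.ne', lintegral_smul_measure,
    finrank_euclideanSpace_fin, abs_of_nonneg (by positivity), smul_eq_mul, ← mul_assoc,
    ← ENNReal.ofReal_mul (by positivity), mul_inv_cancel₀ (by positivity), ofReal_one, one_mul]

lemma kernelInt {n : ℕ} {s : ℝ} (hs : 0 < s) :
    ∫⁻ z : EuclideanSpace ℝ (Fin n), ENNReal.ofReal ((‖z‖ + s) ^ (-((n : ℝ) + 1)))
      ≤ ENNReal.ofReal s⁻¹ * C2 n := by
  have hmeas : Measurable fun z : EuclideanSpace ℝ (Fin n) =>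
      ENNReal.ofReal ((‖z‖ + s) ^ (-((n : ℝ) + 1))) := by fun_prop
  rw [myLintegral_smul _ hmeas hs]
  have heq : ∀ w : EuclideanSpace ℝ (Fin n),
      ENNReal.ofReal ((‖s • w‖ + s) ^ (-((n : ℝ) + 1)))
        = ENNReal.ofReal (s ^ (-((n : ℝ) + 1))) * ENNReal.ofReal ((1 + ‖w‖) ^ (-((n : ℝ) + 1))) := by
    intro w
    rw [norm_smul, Real.norm_of_nonneg hs.le, ← ENNReal.ofReal_mul (by positivity),
      ← Real.mul_rpow hs.le (by positivity)]
    ring_nf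
  simp only [heq]
  rw [lintegral_const_mul _ (by fun_prop), ← mul_assoc, ← ENNReal.ofReal_mul (by positivity)]
  apply mul_le_mul_left (ENNReal.ofReal_le_ofReal _)
  rw [← Real.rpow_natCast s n, ← Real.rpow_add hs, ← Real.rpow_neg_one s]
  apply le_of_eq; congr 1; ring

lemma ball_rpow_integral {n : ℕ} (hn : 3 ≤ n) {α R : ℝ} (hα0 : 0 < α) (hαn : α < n)
    (hR : 0 < R) :
    ∫⁻ y in ball (0 : EuclideanSpace ℝ (Fin n)) R, ENNReal.ofReal (‖y‖ ^ (-α))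
      ≤ ENNReal.ofReal (R ^ ((n:ℝ) - α)) * C3 n α := by
  haveI : Nonempty (Fin n) := ⟨⟨0, by omega⟩⟩
  haveI : Nontrivial (EuclideanSpace ℝ (Fin n)) := inferInstance
  set E := EuclideanSpace ℝ (Fin n)
  set c : ℕ → ℝ≥0∞ := fun k => ENNReal.ofReal ((R / 2 ^ (k+1)) ^ (-α)) with hc
  set g : E → ℝ≥0∞ := fun y => ∑' k : ℕ, (ball (0:E) (R / 2 ^ k)).indicator (fun _ => c k) y
    with hg
  -- pointwise bound on the ball
  have hpt : ∀ y ∈ ball (0:E) R, ENNReal.ofReal (‖y‖ ^ (-α)) ≤ g y := by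
    intro y hy
    rcases eq_or_ne y 0 with rfl | hy0
    · simp [Real.zero_rpow (by linarith : -α ≠ 0)]
    · have hny : 0 < ‖y‖ := norm_pos_iff.2 hy0
      have hyR : ‖y‖ < R := by simpa [dist_eq_norm] using hy
      have hex : ∃ k : ℕ, R / 2 ^ (k+1) ≤ ‖y‖ := by
        obtain ⟨m, hm⟩ := pow_unbounded_of_one_lt (R / ‖y‖) (one_lt_two (α := ℝ))
        refine ⟨m, ?_⟩
        rw [div_le_iff₀ (by positivity)]
        rw [div_lt_iff₀ hny] at hm
        calc R ≤ ‖y‖ * 2 ^ m := by linarith [hm.le]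
          _ ≤ ‖y‖ * 2 ^ (m+1) := by
              gcongr <;> norm_num
      set k := Nat.find hex with hk
      have h1 : R / 2 ^ (k+1) ≤ ‖y‖ := Nat.find_spec hex
      have h2 : y ∈ ball (0:E) (R / 2 ^ k) := by
        rcases Nat.eq_zero_or_pos k with h | h
        · simpa [h, dist_eq_norm] using hyR
        · obtain ⟨j, hj⟩ := Nat.exists_eq_succ_of_ne_zero h.ne'
          have hmin := Nat.find_min hex (m := j) (by omega)
          push_neg at hmin
          rw [hj]
          simpa [dist_eq_norm] using hmin
      calc ENNReal.ofReal (‖y‖ ^ (-α)) ≤ c k := by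
            apply ENNReal.ofReal_le_ofReal
            exact Real.rpow_le_rpow_of_nonpos (by positivity) h1 (by linarith)
        _ = (ball (0:E) (R / 2 ^ k)).indicator (fun _ => c k) y := by
            rw [Set.indicator_of_mem h2]
        _ ≤ g y := ENNReal.le_tsum k
  calc ∫⁻ y in ball (0:E) R, ENNReal.ofReal (‖y‖ ^ (-α))
      ≤ ∫⁻ y in ball (0:E) R, g y := setLIntegral_mono' measurableSet_ball hpt
    _ ≤ ∫⁻ y, g y := setLIntegral_le_lintegral _ _
    _ = ∑' k : ℕ, c k * volume (ball (0:E) (R / 2 ^ k)) := by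
        rw [hg, lintegral_tsum (fun k => (measurable_const.indicator measurableSet_ball).aemeasurable)]
        congr 1; ext k
        rw [lintegral_indicator measurableSet_ball, setLIntegral_const]
    _ = ∑' k : ℕ, (ENNReal.ofReal (R ^ ((n:ℝ) - α) * 2 ^ α) *
          ENNReal.ofReal ((2:ℝ) ^ (α - (n:ℝ))) ^ k) * volume (ball (0:E) 1) := by
        congr 1; ext k
        rw [Measure.addHaar_ball _ _ (by positivity), finrank_euclideanSpace_fin, hc, ← mul_assoc]
        congr 1
        rw [← ENNReal.ofReal_pow (by positivity), ← ENNReal.ofReal_mul (by positivity),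
          ← ENNReal.ofReal_mul (by positivity)]
        congr 1
        rw [← Real.rpow_natCast (R / 2 ^ k) n]
        -- the real identity
        have h2 : (0:ℝ) < 2 := two_pos
        rw [← Real.rpow_natCast ((2:ℝ) ^ (α - (n:ℝ))) k, ← Real.rpow_natCast (2:ℝ) (k+1),
          ← Real.rpow_natCast (2:ℝ) k,
          Real.div_rpow hR.le (by positivity), Real.div_rpow hR.le (by positivity),
          ← Real.rpow_mul h2.le, ← Real.rpow_mul h2.le, ← Real.rpow_mul h2.le,
          div_mul_div_comm, ← Real.rpow_add hR, ← Real.rpow_add h2]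
        rw [show (-α) + (n:ℝ) = (n:ℝ) - α by ring]
        rw [div_eq_mul_inv, ← Real.rpow_neg h2.le, mul_assoc, ← Real.rpow_add h2]
        congr 1
        push_cast
        ring
    _ = ENNReal.ofReal (R ^ ((n:ℝ) - α)) * C3 n α := by
        rw [ENNReal.tsum_mul_right, ENNReal.tsum_mul_left, ENNReal.tsum_geometric,
          ENNReal.ofReal_mul (by positivity), C3]
        ring
lemma time_integral {θ t : ℝ} (hθ0 : 0 < θ) (hθ1 : θ < 1) (ht : 0 < t) :
    ∫⁻ τ in Set.Ioo 0 t, ENNReal.ofReal (τ ^ (-θ) * (t - τ) ^ (-(1/2 : ℝ)))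
      ≤ ENNReal.ofReal ((2:ℝ) ^ (θ - 1/2) * ((1-θ)⁻¹ + 2)) * ENNReal.ofReal (t ^ ((1:ℝ)/2 - θ)) := by
  have ht2 : (0:ℝ) < t/2 := by linarith
  have hmono : Set.Ioo (0:ℝ) t ⊆ Set.Ioc 0 (t/2) ∪ Set.Ioo (t/2) t := by
    rintro τ ⟨h1, h2⟩
    by_cases h : τ ≤ t/2
    · exact Or.inl ⟨h1, h⟩
    · exact Or.inr ⟨lt_of_not_ge h, h2⟩
  calc ∫⁻ τ in Set.Ioo 0 t, ENNReal.ofReal (τ ^ (-θ) * (t - τ) ^ (-(1/2 : ℝ)))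
      ≤ ∫⁻ τ in Set.Ioc 0 (t/2) ∪ Set.Ioo (t/2) t,
          ENNReal.ofReal (τ ^ (-θ) * (t - τ) ^ (-(1/2 : ℝ))) := lintegral_mono_set hmono
    _ ≤ (∫⁻ τ in Set.Ioc 0 (t/2), ENNReal.ofReal (τ ^ (-θ) * (t - τ) ^ (-(1/2 : ℝ))))
        + ∫⁻ τ in Set.Ioo (t/2) t, ENNReal.ofReal (τ ^ (-θ) * (t - τ) ^ (-(1/2 : ℝ))) :=
        lintegral_union_le _ _ _
    _ ≤ ENNReal.ofReal ((t/2) ^ (-(1/2:ℝ)) * ((t/2) ^ (1-θ) / (1-θ)))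
        + ENNReal.ofReal ((t/2) ^ (-θ) * (2 * (t/2) ^ ((1:ℝ)/2))) := by
        gcongr ?_ + ?_
        · -- first piece
          have hb : ∀ τ ∈ Set.Ioc (0:ℝ) (t/2),
              ENNReal.ofReal (τ ^ (-θ) * (t - τ) ^ (-(1/2 : ℝ)))
                ≤ ENNReal.ofReal ((t/2) ^ (-(1/2:ℝ))) * ENNReal.ofReal (τ ^ (-θ)) := by
            rintro τ ⟨h1, h2⟩
            rw [← ENNReal.ofReal_mul (Real.rpow_nonneg ht2.le _)]
            apply ENNReal.ofReal_le_ofReal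
            have hle : (t - τ) ^ (-(1/2:ℝ)) ≤ (t/2) ^ (-(1/2:ℝ)) :=
              Real.rpow_le_rpow_of_nonpos ht2 (by linarith) (by norm_num)
            calc τ ^ (-θ) * (t - τ) ^ (-(1/2:ℝ)) ≤ τ ^ (-θ) * (t/2) ^ (-(1/2:ℝ)) :=
                  mul_le_mul_of_nonneg_left hle (Real.rpow_nonneg h1.le _)
              _ = (t/2) ^ (-(1/2:ℝ)) * τ ^ (-θ) := mul_comm _ _
          calc _ ≤ ∫⁻ τ in Set.Ioc (0:ℝ) (t/2),
                ENNReal.ofReal ((t/2) ^ (-(1/2:ℝ))) * ENNReal.ofReal (τ ^ (-θ)) :=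
                setLIntegral_mono' measurableSet_Ioc hb
            _ = ENNReal.ofReal ((t/2) ^ (-(1/2:ℝ))) * ∫⁻ τ in Set.Ioc (0:ℝ) (t/2),
                ENNReal.ofReal (τ ^ (-θ)) := lintegral_const_mul _ (by fun_prop)
            _ ≤ _ := by
                rw [ENNReal.ofReal_mul (Real.rpow_nonneg ht2.le _)]
                apply mul_le_mul_right
                have hInt : IntegrableOn (fun τ : ℝ => τ ^ (-θ)) (Set.Ioc 0 (t/2)) := by
                  rw [← intervalIntegrable_iff_integrableOn_Ioc_of_le ht2.le]
                  exact intervalIntegral.intervalIntegrable_rpow' (by linarith)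
                rw [← ofReal_integral_eq_lintegral_ofReal hInt
                  (((ae_restrict_iff' measurableSet_Ioc).2 (ae_of_all _
                    (fun τ hτ => Real.rpow_nonneg hτ.1.le _))))]
                apply ENNReal.ofReal_le_ofReal
                rw [← intervalIntegral.integral_of_le ht2.le,
                  integral_rpow (Or.inl (by linarith)),
                  Real.zero_rpow (by linarith : -θ + 1 ≠ 0)]
                rw [show -θ + 1 = 1 - θ by ring]
                simp
        · -- second piece
          have hb : ∀ τ ∈ Set.Ioo (t/2) t,
              ENNReal.ofReal (τ ^ (-θ) * (t - τ) ^ (-(1/2 : ℝ)))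
                ≤ ENNReal.ofReal ((t/2) ^ (-θ)) * ENNReal.ofReal ((t - τ) ^ (-(1/2:ℝ))) := by
            rintro τ ⟨h1, h2⟩
            rw [← ENNReal.ofReal_mul (Real.rpow_nonneg ht2.le _)]
            apply ENNReal.ofReal_le_ofReal
            have hle : τ ^ (-θ) ≤ (t/2) ^ (-θ) :=
              Real.rpow_le_rpow_of_nonpos ht2 h1.le (by linarith)
            exact mul_le_mul_of_nonneg_right hle (Real.rpow_nonneg (by linarith) _)
          calc _ ≤ ∫⁻ τ in Set.Ioo (t/2) t,
                ENNReal.ofReal ((t/2) ^ (-θ)) * ENNReal.ofReal ((t - τ) ^ (-(1/2:ℝ))) :=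
                setLIntegral_mono' measurableSet_Ioo hb
            _ = ENNReal.ofReal ((t/2) ^ (-θ)) * ∫⁻ τ in Set.Ioo (t/2) t,
                ENNReal.ofReal ((t - τ) ^ (-(1/2:ℝ))) := lintegral_const_mul _ (by fun_prop)
            _ ≤ _ := by
                rw [ENNReal.ofReal_mul (Real.rpow_nonneg ht2.le _)]
                apply mul_le_mul_right
                have hII : IntervalIntegrable (fun τ : ℝ => (t - τ) ^ (-(1/2:ℝ))) volume (t/2) t := by
                  have h0 := (intervalIntegral.intervalIntegrable_rpow'
                    (a := 0) (b := t/2) (r := -(1/2:ℝ)) (by norm_num)).comp_sub_left t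
                  rw [sub_zero, show t - t/2 = t/2 by ring] at h0
                  exact h0.symm
                have hInt : IntegrableOn (fun τ : ℝ => (t - τ) ^ (-(1/2:ℝ))) (Set.Ioo (t/2) t) := by
                  rw [← intervalIntegrable_iff_integrableOn_Ioo_of_le (by linarith)]
                  exact hII
                rw [← ofReal_integral_eq_lintegral_ofReal hInt
                  (((ae_restrict_iff' measurableSet_Ioo).2 (ae_of_all _
                    (fun τ hτ => Real.rpow_nonneg (by linarith [hτ.2]) _))))]
                apply ENNReal.ofReal_le_ofReal
                rw [← integral_Ioc_eq_integral_Ioo, ← intervalIntegral.integral_of_le (by linarith),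
                  intervalIntegral.integral_comp_sub_left (fun σ => σ ^ (-(1/2:ℝ))) t]
                rw [show t - t = 0 by ring, show t - t/2 = t/2 by ring]
                rw [integral_rpow (Or.inl (by norm_num)),
                  Real.zero_rpow (by norm_num : -(1/2:ℝ) + 1 ≠ 0)]
                rw [show -(1/2:ℝ) + 1 = 1/2 by norm_num]
                rw [sub_zero, div_eq_mul_inv]
                norm_num
                rw [mul_comm]
    _ ≤ _ := by
        have ha1 : 0 ≤ (t/2) ^ (-(1/2:ℝ)) * ((t/2) ^ (1-θ) / (1-θ)) :=
          mul_nonneg (Real.rpow_nonneg ht2.le _)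
            (div_nonneg (Real.rpow_nonneg ht2.le _) (by linarith))
        have ha2 : 0 ≤ (t/2) ^ (-θ) * (2 * (t/2) ^ ((1:ℝ)/2)) :=
          mul_nonneg (Real.rpow_nonneg ht2.le _)
            (mul_nonneg (by norm_num) (Real.rpow_nonneg ht2.le _))
        rw [← ENNReal.ofReal_add ha1 ha2,
          ← ENNReal.ofReal_mul (mul_nonneg (Real.rpow_nonneg (by norm_num) _)
            (add_nonneg (inv_nonneg.2 (by linarith)) (by norm_num)))]
        apply ENNReal.ofReal_le_ofReal
        have h1 : (t/2) ^ (-(1/2:ℝ)) * (t/2) ^ (1-θ) = (t/2) ^ ((1:ℝ)/2 - θ) := by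
          rw [← Real.rpow_add ht2]; congr 1; ring
        have h2 : (t/2) ^ (-θ) * (t/2) ^ ((1:ℝ)/2) = (t/2) ^ ((1:ℝ)/2 - θ) := by
          rw [← Real.rpow_add ht2]; congr 1; ring
        have h3 : (t/2) ^ ((1:ℝ)/2 - θ) = 2 ^ (θ - 1/2) * t ^ ((1:ℝ)/2 - θ) := by
          rw [show t/2 = t * 2⁻¹ by ring, Real.mul_rpow ht.le (by norm_num),
            ← Real.rpow_neg_one (2:ℝ), ← Real.rpow_mul (by norm_num)]
          rw [show (-1) * ((1:ℝ)/2 - θ) = θ - 1/2 by ring]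
          ring
        calc (t/2) ^ (-(1/2:ℝ)) * ((t/2) ^ (1-θ) / (1-θ)) + (t/2) ^ (-θ) * (2 * (t/2) ^ ((1:ℝ)/2))
            = ((t/2) ^ (-(1/2:ℝ)) * (t/2) ^ (1-θ)) * (1-θ)⁻¹
                + ((t/2) ^ (-θ) * (t/2) ^ ((1:ℝ)/2)) * 2 := by ring
          _ = (t/2) ^ ((1:ℝ)/2 - θ) * (1-θ)⁻¹ + (t/2) ^ ((1:ℝ)/2 - θ) * 2 := by rw [h1, h2]
          _ = 2 ^ (θ - 1/2) * ((1-θ)⁻¹ + 2) * t ^ ((1:ℝ)/2 - θ) := by rw [h3]; ring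
          _ ≤ _ := le_refl _
lemma spatial_step {n : ℕ} (hn : 3 ≤ n) {α s : ℝ} (hα0 : 0 < α) (hαn : α < n) (hs : 0 < s)
    (x : EuclideanSpace ℝ (Fin n)) (hx : x ≠ 0) :
    ∫⁻ y, ENNReal.ofReal (‖y‖ ^ (-α) * (‖x - y‖ + s) ^ (-((n : ℝ) + 1)))
      ≤ ENNReal.ofReal ((2:ℝ) ^ α) * (C2 n + C3 n α) *
          ENNReal.ofReal (‖x‖ ^ (-α) * s⁻¹) := by
  have kernel_integral := kernelInt (n := n) hs
  have ball_int : ∀ R : ℝ, 0 < R →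
      ∫⁻ y in ball (0 : EuclideanSpace ℝ (Fin n)) R, ENNReal.ofReal (‖y‖ ^ (-α))
        ≤ ENNReal.ofReal (R ^ ((n:ℝ) - α)) * C3 n α := fun R hR =>
    ball_rpow_integral hn hα0 hαn hR
  have hxn : 0 < ‖x‖ := norm_pos_iff.2 hx
  set R : ℝ := ‖x‖ / 2 with hRdef
  have hR : 0 < R := by positivity
  set f : EuclideanSpace ℝ (Fin n) → ℝ≥0∞ := fun y => ENNReal.ofReal (‖y‖ ^ (-α) * (‖x - y‖ + s) ^ (-((n : ℝ) + 1)))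
    with hf
  have hsplit : ∫⁻ y, f y = (∫⁻ y in ball (0:EuclideanSpace ℝ (Fin n)) R, f y) + ∫⁻ y in (ball (0:EuclideanSpace ℝ (Fin n)) R)ᶜ, f y :=
    (lintegral_add_compl f measurableSet_ball).symm
  have hRsinv : (R + s) ^ (-((n:ℝ) + 1)) * R ^ ((n:ℝ) - α) ≤ R ^ (-α) * s⁻¹ := by
    have h1 : R ^ (n:ℝ) * s ≤ (R + s) ^ ((n:ℝ) + 1) := by
      rw [Real.rpow_add (by positivity), Real.rpow_one]
      exact mul_le_mul (Real.rpow_le_rpow hR.le (by linarith) (by positivity)) (by linarith)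
        hs.le (by positivity)
    have h2 : (R + s) ^ (-((n:ℝ) + 1)) ≤ (R ^ (n:ℝ) * s)⁻¹ := by
      rw [Real.rpow_neg (by positivity)]
      exact inv_anti₀ (by positivity) h1
    calc (R + s) ^ (-((n:ℝ) + 1)) * R ^ ((n:ℝ) - α) ≤ (R ^ (n:ℝ) * s)⁻¹ * R ^ ((n:ℝ) - α) := by
          apply mul_le_mul_of_nonneg_right h2 (Real.rpow_nonneg hR.le _)
      _ = R ^ (-α) * s⁻¹ := by
          rw [mul_inv, mul_comm, ← mul_assoc, ← Real.rpow_neg hR.le, ← Real.rpow_add hR]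
          congr 2
          ring
  have hball : ∫⁻ y in ball (0:EuclideanSpace ℝ (Fin n)) R, f y
      ≤ ENNReal.ofReal (R ^ (-α) * s⁻¹) * C3 n α := by
    have hb : ∀ y ∈ ball (0:EuclideanSpace ℝ (Fin n)) R, f y ≤
        ENNReal.ofReal ((R + s) ^ (-((n:ℝ) + 1))) * ENNReal.ofReal (‖y‖ ^ (-α)) := by
      intro y hy
      rw [hf, ← ENNReal.ofReal_mul (Real.rpow_nonneg (by positivity) _)]
      apply ENNReal.ofReal_le_ofReal
      rw [mul_comm ((R + s) ^ (-((n:ℝ) + 1)))]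
      apply mul_le_mul_of_nonneg_left _ (Real.rpow_nonneg (norm_nonneg y) _)
      apply Real.rpow_le_rpow_of_nonpos (by positivity) _ (by linarith [Nat.cast_nonneg (α := ℝ) n])
      have hy' : ‖y‖ < R := by simpa [dist_eq_norm] using hy
      have : R ≤ ‖x - y‖ := by
        have := norm_sub_norm_le x y
        have hxR : ‖x‖ = 2 * R := by rw [hRdef]; ring
        linarith
      linarith
    calc ∫⁻ y in ball (0:EuclideanSpace ℝ (Fin n)) R, f y
        ≤ ∫⁻ y in ball (0:EuclideanSpace ℝ (Fin n)) R,
            ENNReal.ofReal ((R + s) ^ (-((n:ℝ) + 1))) * ENNReal.ofReal (‖y‖ ^ (-α)) :=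
          setLIntegral_mono' measurableSet_ball hb
      _ = ENNReal.ofReal ((R + s) ^ (-((n:ℝ) + 1))) *
            ∫⁻ y in ball (0:EuclideanSpace ℝ (Fin n)) R, ENNReal.ofReal (‖y‖ ^ (-α)) :=
          lintegral_const_mul _ (by fun_prop)
      _ ≤ ENNReal.ofReal ((R + s) ^ (-((n:ℝ) + 1))) *
            (ENNReal.ofReal (R ^ ((n:ℝ) - α)) * C3 n α) :=
          mul_le_mul_right (ball_int R hR) _
      _ ≤ ENNReal.ofReal (R ^ (-α) * s⁻¹) * C3 n α := by
          rw [← mul_assoc, ← ENNReal.ofReal_mul (Real.rpow_nonneg (by positivity) _)]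
          exact mul_le_mul_left (ENNReal.ofReal_le_ofReal hRsinv) _
  have hcompl : ∫⁻ y in (ball (0:EuclideanSpace ℝ (Fin n)) R)ᶜ, f y
      ≤ ENNReal.ofReal (R ^ (-α) * s⁻¹) * C2 n := by
    have hb : ∀ y ∈ (ball (0:EuclideanSpace ℝ (Fin n)) R)ᶜ, f y ≤
        ENNReal.ofReal (R ^ (-α)) * ENNReal.ofReal ((‖x - y‖ + s) ^ (-((n:ℝ) + 1))) := by
      intro y hy
      have hy' : R ≤ ‖y‖ := by
        simp only [Set.mem_compl_iff, mem_ball, dist_zero_right, not_lt] at hy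
        exact hy
      rw [hf, ← ENNReal.ofReal_mul (Real.rpow_nonneg hR.le _)]
      apply ENNReal.ofReal_le_ofReal
      apply mul_le_mul_of_nonneg_right _ (Real.rpow_nonneg (by positivity) _)
      exact Real.rpow_le_rpow_of_nonpos hR hy' (by linarith)
    calc ∫⁻ y in (ball (0:EuclideanSpace ℝ (Fin n)) R)ᶜ, f y
        ≤ ∫⁻ y in (ball (0:EuclideanSpace ℝ (Fin n)) R)ᶜ,
            ENNReal.ofReal (R ^ (-α)) * ENNReal.ofReal ((‖x - y‖ + s) ^ (-((n:ℝ) + 1))) :=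
          setLIntegral_mono' measurableSet_ball.compl hb
      _ ≤ ∫⁻ y : EuclideanSpace ℝ (Fin n),
            ENNReal.ofReal (R ^ (-α)) * ENNReal.ofReal ((‖x - y‖ + s) ^ (-((n:ℝ) + 1))) :=
          setLIntegral_le_lintegral _ _
      _ = ENNReal.ofReal (R ^ (-α)) *
            ∫⁻ y : EuclideanSpace ℝ (Fin n), ENNReal.ofReal ((‖x - y‖ + s) ^ (-((n:ℝ) + 1))) :=
          lintegral_const_mul _ (by fun_prop)
      _ ≤ ENNReal.ofReal (R ^ (-α)) * (ENNReal.ofReal s⁻¹ * C2 n) := by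
          apply mul_le_mul_right
          have htrans : ∫⁻ y : EuclideanSpace ℝ (Fin n), ENNReal.ofReal ((‖x - y‖ + s) ^ (-((n:ℝ) + 1)))
              = ∫⁻ z : EuclideanSpace ℝ (Fin n), ENNReal.ofReal ((‖z‖ + s) ^ (-((n:ℝ) + 1))) := by
            have : ∀ y : EuclideanSpace ℝ (Fin n), ‖x - y‖ = ‖y - x‖ := fun y => norm_sub_rev x y
            simp_rw [this]
            exact lintegral_sub_right_eq_self
              (fun z : EuclideanSpace ℝ (Fin n) => ENNReal.ofReal ((‖z‖ + s) ^ (-((n:ℝ) + 1)))) x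
          rw [htrans]
          exact kernel_integral
      _ = ENNReal.ofReal (R ^ (-α) * s⁻¹) * C2 n := by
          rw [ENNReal.ofReal_mul (Real.rpow_nonneg hR.le _), mul_assoc]
  have hRx : ENNReal.ofReal (R ^ (-α) * s⁻¹)
      = ENNReal.ofReal ((2:ℝ) ^ α) * ENNReal.ofReal (‖x‖ ^ (-α) * s⁻¹) := by
    rw [← ENNReal.ofReal_mul (Real.rpow_nonneg (by norm_num) _)]
    congr 1
    rw [hRdef, div_eq_mul_inv, Real.mul_rpow (norm_nonneg x) (by norm_num)]
    have h2 : ((2:ℝ)⁻¹) ^ (-α) = 2 ^ α := by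
      rw [← Real.rpow_neg_one (2:ℝ), ← Real.rpow_mul (by norm_num)]
      norm_num
    rw [h2]
    ring
  calc ∫⁻ y, f y = (∫⁻ y in ball (0:EuclideanSpace ℝ (Fin n)) R, f y) + ∫⁻ y in (ball (0:EuclideanSpace ℝ (Fin n)) R)ᶜ, f y := hsplit
    _ ≤ ENNReal.ofReal (R ^ (-α) * s⁻¹) * C3 n α + ENNReal.ofReal (R ^ (-α) * s⁻¹) * C2 n :=
        add_le_add hball hcompl
    _ = ENNReal.ofReal (R ^ (-α) * s⁻¹) * (C2 n + C3 n α) := by ring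
    _ = ENNReal.ofReal ((2:ℝ) ^ α) * (C2 n + C3 n α) *
          ENNReal.ofReal (‖x‖ ^ (-α) * s⁻¹) := by rw [hRx]; ring

end Aux

/-- weighted pointwise estimate for the Oseen-type convolution:
`|x|^α t^{n/(2p)} ∫₀^t ∫ (|x-y|+(t-τ)^{1/2})^{-(n+1)} |a||b| dy dτ ≤ c A B`. -/
theorem stmt10 (n : ℕ) (hn : 3 ≤ n) (p : ℝ) (hp : (n : ℝ) < p)
    (α : ℝ) (hα : α = 1 - n / p) (T : ℝ) (hT : 0 < T)
    (a b : ℝ → EuclideanSpace ℝ (Fin n) → ℝ)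
    (ha : Measurable (Function.uncurry a)) (hb : Measurable (Function.uncurry b))
    (hA : supA n a T < ⊤) (hB : supB n p α b T < ⊤) :
    ∃ c > 0, ∀ t ∈ Set.Ioo 0 T, ∀ x : EuclideanSpace ℝ (Fin n), x ≠ 0 →
      ENNReal.ofReal (‖x‖ ^ α * t ^ ((n : ℝ) / (2 * p))) *
        ∫⁻ τ in Set.Ioo 0 t, ∫⁻ y, ENNReal.ofReal
          ((‖x - y‖ + (t - τ) ^ ((1 : ℝ) / 2)) ^ (-((n : ℝ) + 1)) *
            |a τ y| * |b τ y|) ≤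
        ENNReal.ofReal c * supA n a t * supB n p α b t := by
  have hn3 : (3:ℝ) ≤ (n:ℝ) := by exact_mod_cast hn
  have hp0 : 0 < p := lt_of_le_of_lt (by positivity) hp
  set θ : ℝ := (1:ℝ)/2 + (n:ℝ)/(2*p) with hθdef
  have hnp2 : 0 < (n:ℝ)/(2*p) := by positivity
  have hθ0 : 0 < θ := by simp only [hθdef]; linarith
  have hθ1 : θ < 1 := by
    have h1 : (n:ℝ)/(2*p) < 1/2 := by
      rw [div_lt_iff₀ (by linarith)]
      linarith
    simp only [hθdef]; linarith
  have hα0 : 0 < α := by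
    rw [hα, sub_pos, div_lt_one hp0]; exact hp
  have hα1 : α < 1 := by
    rw [hα]; have : 0 < (n:ℝ)/p := by positivity
    linarith
  have hαn : α < n := by linarith
  -- the total constant
  set CS : ℝ≥0∞ := ENNReal.ofReal ((2:ℝ) ^ α) * (C2 n + C3 n α) with hCSdef
  set c4 : ℝ := (2:ℝ) ^ (θ - 1/2) * ((1-θ)⁻¹ + 2) with hc4def
  set Ctot : ℝ≥0∞ := CS * ENNReal.ofReal c4 with hCtotdef
  have hCtot_ne : Ctot ≠ ⊤ := by
    rw [hCtotdef, hCSdef]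
    exact (ENNReal.mul_lt_top (ENNReal.mul_lt_top ofReal_lt_top
      (ENNReal.add_lt_top.2 ⟨C2_lt_top n, C3_lt_top n α hαn⟩)) ofReal_lt_top).ne
  refine ⟨Ctot.toReal + 1, by positivity, ?_⟩
  have hCc : Ctot ≤ ENNReal.ofReal (Ctot.toReal + 1) := by
    conv_lhs => rw [← ENNReal.ofReal_toReal hCtot_ne]
    exact ENNReal.ofReal_le_ofReal (by linarith)
  rintro t ⟨ht0, htT⟩ x hx
  have hxn : 0 < ‖x‖ := norm_pos_iff.2 hx
  set A : ℝ≥0∞ := supA n a t with hAdef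
  set B : ℝ≥0∞ := supB n p α b t with hBdef
  haveI : Nonempty (Fin n) := ⟨⟨0, by omega⟩⟩
  haveI : Nontrivial (EuclideanSpace ℝ (Fin n)) := inferInstance
  -- per-τ estimate
  have key : ∀ τ ∈ Set.Ioo (0:ℝ) t,
      (∫⁻ y, ENNReal.ofReal
          ((‖x - y‖ + (t - τ) ^ ((1 : ℝ) / 2)) ^ (-((n : ℝ) + 1)) * |a τ y| * |b τ y|))
        ≤ (A * B * CS * ENNReal.ofReal (‖x‖ ^ (-α))) *
            ENNReal.ofReal (τ ^ (-θ) * (t - τ) ^ (-(1/2 : ℝ))) := by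
    rintro τ ⟨hτ0, hτt⟩
    have hts : 0 < t - τ := by linarith
    set s : ℝ := (t - τ) ^ ((1:ℝ)/2) with hsdef
    have hs : 0 < s := Real.rpow_pos_of_pos hts _
    -- pointwise a.e. bound
    have hae1 : ∀ᵐ y : EuclideanSpace ℝ (Fin n) ∂volume,
        (‖a τ y‖₊ : ℝ≥0∞) ≤ eLpNorm (a τ) ⊤ volume := by
      rw [eLpNorm_exponent_top]
      exact ae_le_eLpNormEssSup
    have hae2 : ∀ᵐ y : EuclideanSpace ℝ (Fin n) ∂volume, y ≠ 0 := by
      rw [ae_iff]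
      simpa using measure_singleton (0 : EuclideanSpace ℝ (Fin n))
    have hpt : ∀ᵐ y : EuclideanSpace ℝ (Fin n) ∂volume,
        ENNReal.ofReal ((‖x - y‖ + s) ^ (-((n : ℝ) + 1)) * |a τ y| * |b τ y|)
          ≤ (A * B * ENNReal.ofReal (τ ^ (-θ))) *
              ENNReal.ofReal (‖y‖ ^ (-α) * (‖x - y‖ + s) ^ (-((n : ℝ) + 1))) := by
      filter_upwards [hae1, hae2] with y h1 h2
      set K : ℝ := (‖x - y‖ + s) ^ (-((n : ℝ) + 1)) with hKdef
      have hK0 : 0 < K := Real.rpow_pos_of_pos (by positivity) _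
      have hyn : 0 < ‖y‖ := norm_pos_iff.2 h2
      have hW0 : ENNReal.ofReal (τ ^ θ * ‖y‖ ^ α) ≠ 0 :=
        ne_of_gt (ENNReal.ofReal_pos.2
          (mul_pos (Real.rpow_pos_of_pos hτ0 _) (Real.rpow_pos_of_pos hyn _)))
      refine (ENNReal.mul_le_mul_iff_left hW0 ENNReal.ofReal_ne_top).mp ?_
      have hLHS : ENNReal.ofReal (K * |a τ y| * |b τ y|) * ENNReal.ofReal (τ ^ θ * ‖y‖ ^ α)
          = ENNReal.ofReal K * (ENNReal.ofReal (τ ^ ((1:ℝ)/2)) * ENNReal.ofReal |a τ y|) *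
              (ENNReal.ofReal (τ ^ ((n:ℝ)/(2*p))) * ENNReal.ofReal (‖y‖ ^ α * |b τ y|)) := by
        rw [← ENNReal.ofReal_mul (p := K * |a τ y| * |b τ y|)
          (mul_nonneg (mul_nonneg hK0.le (abs_nonneg _)) (abs_nonneg _))]
        have hτθ : τ ^ θ = τ ^ ((1:ℝ)/2) * τ ^ ((n:ℝ)/(2*p)) := by
          rw [hθdef, Real.rpow_add hτ0]
        have hsplit : K * |a τ y| * |b τ y| * (τ ^ θ * ‖y‖ ^ α)
            = K * (τ ^ ((1:ℝ)/2) * |a τ y|) * (τ ^ ((n:ℝ)/(2*p)) * (‖y‖ ^ α * |b τ y|)) := by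
          rw [hτθ]; ring
        rw [hsplit,
          ENNReal.ofReal_mul (p := K * (τ ^ ((1:ℝ)/2) * |a τ y|))
            (mul_nonneg hK0.le (mul_nonneg (Real.rpow_nonneg hτ0.le _) (abs_nonneg _))),
          ENNReal.ofReal_mul (p := K) hK0.le,
          ENNReal.ofReal_mul (p := τ ^ ((1:ℝ)/2)) (Real.rpow_nonneg hτ0.le _),
          ENNReal.ofReal_mul (p := τ ^ ((n:ℝ)/(2*p))) (Real.rpow_nonneg hτ0.le _)]
      have hRHS : (A * B * ENNReal.ofReal (τ ^ (-θ))) *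
            ENNReal.ofReal (‖y‖ ^ (-α) * K) * ENNReal.ofReal (τ ^ θ * ‖y‖ ^ α)
          = ENNReal.ofReal K * A * B := by
        have hreal : (τ ^ (-θ)) * (‖y‖ ^ (-α) * K) * (τ ^ θ * ‖y‖ ^ α) = K := by
          have e1 : τ ^ (-θ) * τ ^ θ = 1 := by
            rw [← Real.rpow_add hτ0]; simp
          have e2 : ‖y‖ ^ (-α) * ‖y‖ ^ α = 1 := by
            rw [← Real.rpow_add hyn]; simp
          calc (τ ^ (-θ)) * (‖y‖ ^ (-α) * K) * (τ ^ θ * ‖y‖ ^ α)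
              = (τ ^ (-θ) * τ ^ θ) * ((‖y‖ ^ (-α) * ‖y‖ ^ α) * K) := by ring
            _ = K := by rw [e1, e2]; ring
        calc (A * B * ENNReal.ofReal (τ ^ (-θ))) *
              ENNReal.ofReal (‖y‖ ^ (-α) * K) * ENNReal.ofReal (τ ^ θ * ‖y‖ ^ α)
            = A * B * (ENNReal.ofReal (τ ^ (-θ)) *
                ENNReal.ofReal (‖y‖ ^ (-α) * K) * ENNReal.ofReal (τ ^ θ * ‖y‖ ^ α)) := by ring
          _ = A * B * ENNReal.ofReal ((τ ^ (-θ)) * (‖y‖ ^ (-α) * K) * (τ ^ θ * ‖y‖ ^ α)) := by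
              rw [← ENNReal.ofReal_mul (Real.rpow_nonneg hτ0.le _),
                ← ENNReal.ofReal_mul (mul_nonneg (Real.rpow_nonneg hτ0.le _)
                  (mul_nonneg (Real.rpow_nonneg hyn.le _) hK0.le))]
          _ = ENNReal.ofReal K * A * B := by rw [hreal]; ring
      rw [hLHS, hRHS]
      have hfa : ENNReal.ofReal (τ ^ ((1:ℝ)/2)) * ENNReal.ofReal |a τ y| ≤ A := by
        have h1' : ENNReal.ofReal |a τ y| ≤ eLpNorm (a τ) ⊤ volume := by
          rw [← Real.norm_eq_abs, ofReal_norm]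
          exact h1
        calc ENNReal.ofReal (τ ^ ((1:ℝ)/2)) * ENNReal.ofReal |a τ y|
            ≤ ENNReal.ofReal (τ ^ ((1:ℝ)/2)) * eLpNorm (a τ) ⊤ volume :=
              mul_le_mul_right h1' _
          _ ≤ A := by
              rw [hAdef]
              simp only [supA]
              exact le_iSup₂ (f := fun τ (_ : τ ∈ Set.Ioo (0:ℝ) t) =>
                ENNReal.ofReal (τ ^ ((1:ℝ)/2)) * eLpNorm (a τ) ⊤ volume) τ ⟨hτ0, hτt⟩
      have hfb : ENNReal.ofReal (τ ^ ((n:ℝ)/(2*p))) * ENNReal.ofReal (‖y‖ ^ α * |b τ y|) ≤ B := by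
        calc ENNReal.ofReal (τ ^ ((n:ℝ)/(2*p))) * ENNReal.ofReal (‖y‖ ^ α * |b τ y|)
            ≤ ENNReal.ofReal (τ ^ ((n:ℝ)/(2*p))) *
                ⨆ z : EuclideanSpace ℝ (Fin n), ENNReal.ofReal (‖z‖ ^ α * |b τ z|) :=
              mul_le_mul_right (le_iSup (fun z : EuclideanSpace ℝ (Fin n) =>
                ENNReal.ofReal (‖z‖ ^ α * |b τ z|)) y) _
          _ ≤ B := by
              rw [hBdef]
              simp only [supB]
              exact le_iSup₂ (f := fun τ (_ : τ ∈ Set.Ioo (0:ℝ) t) =>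
                ENNReal.ofReal (τ ^ ((n:ℝ)/(2*p))) *
                  ⨆ z : EuclideanSpace ℝ (Fin n), ENNReal.ofReal (‖z‖ ^ α * |b τ z|)) τ ⟨hτ0, hτt⟩
      calc ENNReal.ofReal K * (ENNReal.ofReal (τ ^ ((1:ℝ)/2)) * ENNReal.ofReal |a τ y|) *
            (ENNReal.ofReal (τ ^ ((n:ℝ)/(2*p))) * ENNReal.ofReal (‖y‖ ^ α * |b τ y|))
          ≤ ENNReal.ofReal K * A * B := by
            exact mul_le_mul' (mul_le_mul' le_rfl hfa) hfb
        _ = ENNReal.ofReal K * A * B := rfl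
    -- integrate the pointwise bound
    calc (∫⁻ y, ENNReal.ofReal
            ((‖x - y‖ + (t - τ) ^ ((1 : ℝ) / 2)) ^ (-((n : ℝ) + 1)) * |a τ y| * |b τ y|))
        ≤ ∫⁻ y, (A * B * ENNReal.ofReal (τ ^ (-θ))) *
            ENNReal.ofReal (‖y‖ ^ (-α) * (‖x - y‖ + s) ^ (-((n : ℝ) + 1))) :=
          lintegral_mono_ae hpt
      _ = (A * B * ENNReal.ofReal (τ ^ (-θ))) *
            ∫⁻ y, ENNReal.ofReal (‖y‖ ^ (-α) * (‖x - y‖ + s) ^ (-((n : ℝ) + 1))) :=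
          lintegral_const_mul _ (by fun_prop)
      _ ≤ (A * B * ENNReal.ofReal (τ ^ (-θ))) *
            (ENNReal.ofReal ((2:ℝ) ^ α) * (C2 n + C3 n α) *
              ENNReal.ofReal (‖x‖ ^ (-α) * s⁻¹)) :=
          mul_le_mul_right (spatial_step hn hα0 hαn hs x hx) _
      _ = (A * B * CS * ENNReal.ofReal (‖x‖ ^ (-α))) *
            ENNReal.ofReal (τ ^ (-θ) * (t - τ) ^ (-(1/2 : ℝ))) := by
          have hsinv : s⁻¹ = (t - τ) ^ (-(1/2 : ℝ)) := by
            rw [hsdef]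
            exact (Real.rpow_neg hts.le _).symm
          rw [hsinv, hCSdef,
            ENNReal.ofReal_mul (Real.rpow_nonneg hxn.le _),
            ENNReal.ofReal_mul (Real.rpow_nonneg hτ0.le _)]
          ring
  -- integrate in time
  have hI : (∫⁻ τ in Set.Ioo 0 t, ∫⁻ y, ENNReal.ofReal
        ((‖x - y‖ + (t - τ) ^ ((1 : ℝ) / 2)) ^ (-((n : ℝ) + 1)) * |a τ y| * |b τ y|))
      ≤ (A * B * CS * ENNReal.ofReal (‖x‖ ^ (-α))) *
          (ENNReal.ofReal c4 * ENNReal.ofReal (t ^ ((1:ℝ)/2 - θ))) := by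
    calc (∫⁻ τ in Set.Ioo 0 t, ∫⁻ y, ENNReal.ofReal
          ((‖x - y‖ + (t - τ) ^ ((1 : ℝ) / 2)) ^ (-((n : ℝ) + 1)) * |a τ y| * |b τ y|))
        ≤ ∫⁻ τ in Set.Ioo 0 t, (A * B * CS * ENNReal.ofReal (‖x‖ ^ (-α))) *
            ENNReal.ofReal (τ ^ (-θ) * (t - τ) ^ (-(1/2 : ℝ))) :=
          setLIntegral_mono' measurableSet_Ioo key
      _ = (A * B * CS * ENNReal.ofReal (‖x‖ ^ (-α))) *
            ∫⁻ τ in Set.Ioo 0 t, ENNReal.ofReal (τ ^ (-θ) * (t - τ) ^ (-(1/2 : ℝ))) :=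
          lintegral_const_mul _ (by fun_prop)
      _ ≤ (A * B * CS * ENNReal.ofReal (‖x‖ ^ (-α))) *
            (ENNReal.ofReal c4 * ENNReal.ofReal (t ^ ((1:ℝ)/2 - θ))) :=
          mul_le_mul_right (time_integral hθ0 hθ1 ht0) _
  -- final assembly
  have hcancel1 : ENNReal.ofReal (‖x‖ ^ α) * ENNReal.ofReal (‖x‖ ^ (-α)) = 1 := by
    rw [← ENNReal.ofReal_mul (Real.rpow_nonneg hxn.le _), ← Real.rpow_add hxn]
    simp
  have hcancel2 : ENNReal.ofReal (t ^ ((n:ℝ)/(2*p))) * ENNReal.ofReal (t ^ ((1:ℝ)/2 - θ)) = 1 := by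
    rw [← ENNReal.ofReal_mul (Real.rpow_nonneg ht0.le _), ← Real.rpow_add ht0]
    rw [show (n:ℝ)/(2*p) + ((1:ℝ)/2 - θ) = 0 by rw [hθdef]; ring]
    simp
  calc ENNReal.ofReal (‖x‖ ^ α * t ^ ((n : ℝ) / (2 * p))) *
        ∫⁻ τ in Set.Ioo 0 t, ∫⁻ y, ENNReal.ofReal
          ((‖x - y‖ + (t - τ) ^ ((1 : ℝ) / 2)) ^ (-((n : ℝ) + 1)) * |a τ y| * |b τ y|)
      ≤ (ENNReal.ofReal (‖x‖ ^ α) * ENNReal.ofReal (t ^ ((n:ℝ)/(2*p)))) *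
          ((A * B * CS * ENNReal.ofReal (‖x‖ ^ (-α))) *
            (ENNReal.ofReal c4 * ENNReal.ofReal (t ^ ((1:ℝ)/2 - θ)))) := by
        rw [← ENNReal.ofReal_mul (Real.rpow_nonneg hxn.le _)]
        exact mul_le_mul_right hI _
    _ = (ENNReal.ofReal (‖x‖ ^ α) * ENNReal.ofReal (‖x‖ ^ (-α))) *
          (ENNReal.ofReal (t ^ ((n:ℝ)/(2*p))) * ENNReal.ofReal (t ^ ((1:ℝ)/2 - θ))) *
          Ctot * (A * B) := by
        rw [hCtotdef]; ring
    _ = Ctot * (A * B) := by rw [hcancel1, hcancel2]; simp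
    _ ≤ ENNReal.ofReal (Ctot.toReal + 1) * (A * B) := mul_le_mul_left hCc _
    _ = ENNReal.ofReal (Ctot.toReal + 1) * A * B := by ring
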